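/- arXiv:1411.6478 — 2 statements merged into one kernel-verified Lean document; each statement's English description precedes it below -/
import Mathlib

section
/- (Lemma: ⇝*_{H,G} is a causal order) Consider any history Ĥ produced by an execution of Algorithm 2 over Algorithm 1, and let ⇝_H be the causal order built from process orders and read-from links. Extend ⇝_H by adding a ww link w_p(X,v) → w_q(Y,w) for every pair of write operations by processes p and q that are neighbors in the proximity graph G, that are unordered in ⇝_H, and whose broadcast WRITE messages are toco-delivered in that order by all processes, and let ⇝*_{H,G} be the transitive closure of the result. Then ⇝*_{H,G} is acyclic, totally orders the write operations of every pair of G-neighboring processes, and remains a causal order: no read in Ĥ returns an overwritten value with respect to ⇝*_{H,G}. -/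
/-!
Model of Algorithm 2 (the fast-read register algorithm) running on top of an
abstract `G`-fisheye (SC,CC)-broadcast.

Processes (type `P`) interact through shared read/write registers (type `X`)
holding values of type `V`; the initial value of every register is `⊥`
(modelled by `Option V`, with `none = ⊥`).  `X.write(v)` at `p` toco-broadcasts
`WRITE(X,v,p)` and waits until this message is toco-delivered at `p`;
`X.read()` at `p` returns the local copy of `X`; upon toco-delivery of
`WRITE(X,v,q)` at `p`, the local copy of `X` at `p` is set to `v`.  Following
the paper, all written values are assumed distinct, so a `WRITE` message is
identified by the (process, register, value) triple it carries.
-/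

namespace FisheyeReg

/-- Events of an execution of Algorithm 2: `invWrite p x v` is the invocation
of `X.write(v)` by `p` (which toco-broadcasts `WRITE(x,v,p)`); `read p x v` is
a (complete) read of register `x` by `p` returning `v`; `deliver p q x v` is
the toco-delivery at `p` of the message `WRITE(x,v,q)`. -/
inductive AEvent (P X V : Type) where
  | invWrite (p : P) (x : X) (v : V)
  | read (p : P) (x : X) (v : Option V)
  | deliver (p : P) (q : P) (x : X) (v : V)

variable {P X V : Type}

/-- The message `WRITE(x,v,q)` is toco-broadcast at time `t`. -/
def bAt (f : ℕ → Option (AEvent P X V)) (q : P) (x : X) (v : V) (t : ℕ) : Prop :=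
  f t = some (.invWrite q x v)

/-- The message `WRITE(x,v,q)` is toco-delivered at process `p` at time `t`. -/
def dAt (f : ℕ → Option (AEvent P X V)) (p q : P) (x : X) (v : V) (t : ℕ) : Prop :=
  f t = some (.deliver p q x v)

/-- The message causal order `⇝_M` on `WRITE` messages (identified by the
triples `(sender, register, value)`). -/
inductive MCausal (f : ℕ → Option (AEvent P X V)) : P × X × V → P × X × V → Prop
  | sameProc {q : P} {x1 x2 : X} {v1 v2 : V} {t1 t2 : ℕ} :
      t1 < t2 → bAt f q x1 v1 t1 → bAt f q x2 v2 t2 →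
      MCausal f (q, x1, v1) (q, x2, v2)
  | delivered {p q : P} {x1 x2 : X} {v1 v2 : V} {t1 t2 : ℕ} :
      t1 < t2 → dAt f p q x1 v1 t1 → bAt f p x2 v2 t2 →
      MCausal f (q, x1, v1) (p, x2, v2)
  | trans {a b c : P × X × V} : MCausal f a b → MCausal f b c → MCausal f a c

/-- An execution of Algorithm 2 over a `G`-fisheye (SC,CC)-broadcast.  `ev` is
the global trace of events (at most one per instant), `val t p x` is the local
copy of register `x` at process `p` at time `t`.  The fields state: the local
copies start at `⊥` and are updated exactly by deliveries of `WRITE` messages;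
reads return the current local copy; all written values are distinct; the
underlying broadcast satisfies Validity, Integrity, Causal order, `G`-delivery
order and Termination; and a writer blocks (performs no other operation) until
its own `WRITE` message is toco-delivered locally. -/
structure Exec (P X V : Type) (G : SimpleGraph P) where
  ev : ℕ → Option (AEvent P X V)
  val : ℕ → P → X → Option V
  val0 : ∀ (p : P) (x : X), val 0 p x = none
  valDeliv : ∀ (t : ℕ) (p q : P) (x : X) (v : V),
    ev t = some (.deliver p q x v) → val (t + 1) p x = some v
  valFrame : ∀ (t : ℕ) (p : P) (x : X),
    (¬ ∃ (q : P) (v : V), ev t = some (.deliver p q x v)) → val (t + 1) p x = val t p x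
  readsLocal : ∀ (t : ℕ) (p : P) (x : X) (v : Option V),
    ev t = some (.read p x v) → v = val t p x
  distinctValues : ∀ (t t' : ℕ) (p p' : P) (x x' : X) (v : V),
    bAt ev p x v t → bAt ev p' x' v t' → t = t'
  validity : ∀ (t : ℕ) (p q : P) (x : X) (v : V),
    dAt ev p q x v t → ∃ t', bAt ev q x v t'
  integrity : ∀ (p q : P) (x : X) (v : V) (t t' : ℕ),
    dAt ev p q x v t → dAt ev p q x v t' → t = t'
  termination : ∀ (t : ℕ) (q : P) (x : X) (v : V),
    bAt ev q x v t → ∀ p : P, ∃ t', dAt ev p q x v t'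
  causalOrder : ∀ m1 m2 : P × X × V, MCausal ev m1 m2 →
    ¬ ∃ (r : P) (t1 t2 : ℕ), t1 < t2 ∧
        dAt ev r m2.1 m2.2.1 m2.2.2 t1 ∧ dAt ev r m1.1 m1.2.1 m1.2.2 t2
  gOrder : ∀ p q : P, G.Adj p q → ∀ (x x' : X) (v v' : V) (tb tb' : ℕ),
    bAt ev p x v tb → bAt ev q x' v' tb' →
    (∃ (r : P) (t1 t2 : ℕ), t1 < t2 ∧ dAt ev r p x v t1 ∧ dAt ev r q x' v' t2) →
    ¬ ∃ (r : P) (t1 t2 : ℕ), t1 < t2 ∧ dAt ev r q x' v' t1 ∧ dAt ev r p x v t2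
  blockingWrite : ∀ (t : ℕ) (p : P) (x : X) (v : V), bAt ev p x v t →
    ∃ td, t < td ∧ dAt ev p p x v td ∧
      ∀ s, t < s → s < td →
        (∀ (x' : X) (v' : V), ev s ≠ some (.invWrite p x' v')) ∧
        (∀ (x' : X) (v' : Option V), ev s ≠ some (.read p x' v'))

/-- Operation at time `t` is a read by `p` of register `x` returning `v`. -/
def isReadAt (f : ℕ → Option (AEvent P X V)) (t : ℕ) (p : P) (x : X) (v : Option V) : Prop :=
  f t = some (.read p x v)

/-- Operation at time `t` is a write by `p` of value `v` to register `x`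
(identified with its invocation event). -/
def isWriteAt (f : ℕ → Option (AEvent P X V)) (t : ℕ) (p : P) (x : X) (v : V) : Prop :=
  f t = some (.invWrite p x v)

/-- Time `t` carries an operation (read or write) of process `p`. -/
def isOpOf (f : ℕ → Option (AEvent P X V)) (t : ℕ) (p : P) : Prop :=
  (∃ (x : X) (v : Option V), isReadAt f t p x v) ∨ (∃ (x : X) (v : V), isWriteAt f t p x v)

/-- Time `t` carries a write operation. -/
def isWrite (f : ℕ → Option (AEvent P X V)) (t : ℕ) : Prop :=
  ∃ (p : P) (x : X) (v : V), isWriteAt f t p x v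

/-- Process order: two operations of the same process, in temporal order. -/
def procOrder (f : ℕ → Option (AEvent P X V)) (a b : ℕ) : Prop :=
  a < b ∧ ∃ p : P, isOpOf f a p ∧ isOpOf f b p

/-- Read-from links: the read at time `r` returns the value `v` written by the
write at time `w` (values being distinct, the write is unique). -/
def readFrom (f : ℕ → Option (AEvent P X V)) (w r : ℕ) : Prop :=
  ∃ (q p : P) (x : X) (v : V), isWriteAt f w q x v ∧ isReadAt f r p x (some v)

/-- The causal order `⇝_H` on operations: the transitive closure of the union
of the process orders and the read-from links. -/
def causalH (f : ℕ → Option (AEvent P X V)) : ℕ → ℕ → Prop :=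
  Relation.TransGen (fun a b => procOrder f a b ∨ readFrom f a b)

/-- `r` is a causal order for the history of the trace `f`: a strict partial
order extending the process orders, in which every read of a register returns
the value of a `r`-latest write to that register preceding it (or `⊥` if no
write to it precedes it), i.e., no read returns an overwritten value. -/
def IsCausalOrderTrace (f : ℕ → Option (AEvent P X V)) (r : ℕ → ℕ → Prop) : Prop :=
  (∀ a, ¬ r a a) ∧
  (∀ a b c, r a b → r b c → r a c) ∧
  (∀ a b, procOrder f a b → r a b) ∧
  (∀ (t : ℕ) (p : P) (x : X) (v : V), isReadAt f t p x (some v) →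
    ∃ (w : ℕ) (q : P), isWriteAt f w q x v ∧ r w t ∧
      ¬ ∃ (w' : ℕ) (q' : P) (v' : V), isWriteAt f w' q' x v' ∧ r w w' ∧ r w' t) ∧
  (∀ (t : ℕ) (p : P) (x : X), isReadAt f t p x none →
    ¬ ∃ (w : ℕ) (q : P) (v : V), isWriteAt f w q x v ∧ r w t)

end FisheyeReg

namespace FisheyeReg

/-- `ww` links: two write operations by processes that are neighbors in the
proximity graph `G`, unordered in `⇝_H`, whose `WRITE` messages are
toco-delivered in that order by all processes. -/
def wwLink {P X V : Type} (G : SimpleGraph P) (f : ℕ → Option (AEvent P X V))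
    (a b : ℕ) : Prop :=
  ∃ (p q : P) (x x' : X) (v v' : V),
    isWriteAt f a p x v ∧ isWriteAt f b q x' v' ∧ G.Adj p q ∧
    ¬ causalH f a b ∧ ¬ causalH f b a ∧
    ∀ (r : P) (t1 t2 : ℕ), dAt f r p x v t1 → dAt f r q x' v' t2 → t1 < t2

/-- The order `⇝*_{H,G}`: the transitive closure of the process orders, the
read-from links, and the `ww` links. -/
def causalHG {P X V : Type} (G : SimpleGraph P) (f : ℕ → Option (AEvent P X V)) :
    ℕ → ℕ → Prop :=
  Relation.TransGen (fun a b => procOrder f a b ∨ readFrom f a b ∨ wwLink G f a b)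

/-!
Attach to every operation the `WRITE` messages it causally depends on (`Sees`): for a read
by `p`, the messages toco-delivered at `p` before it; for a write of `m'`, the messages
delivered before `m'` at every process. Causal order and `G`-delivery order of the
broadcast, the blocking write, and reads returning the local copy make this set grow along
every process-order, read-from and `ww` edge, and put the message of a write into the set of
every operation after it. A cycle must pass through a write (out of a read only
process-order edges leave, and they go forward in time), and would make its message be
delivered before itself. A read cannot return an overwritten value either: the overwriting
message would have been delivered at the reader after the value it returns.
-/

section Trace

variable {P X V : Type} {G : SimpleGraph P} {f : ℕ → Option (AEvent P X V)}

def DeliveredBefore (f : ℕ → Option (AEvent P X V)) (m m' : P × X × V) : Prop :=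
  (∃ t, bAt f m.1 m.2.1 m.2.2 t) ∧
    ∀ (r : P) (t t' : ℕ), dAt f r m.1 m.2.1 m.2.2 t → dAt f r m'.1 m'.2.1 m'.2.2 t' → t < t'

def Sees (f : ℕ → Option (AEvent P X V)) (t : ℕ) (m : P × X × V) : Prop :=
  (∃ (p : P) (x : X) (vv : Option V), isReadAt f t p x vv ∧
      ∃ s < t, dAt f p m.1 m.2.1 m.2.2 s) ∨
    ∃ (p : P) (x : X) (v : V), isWriteAt f t p x v ∧ DeliveredBefore f m (p, x, v)

theorem Sees.exists_dAt_lt {t : ℕ} {p : P} {x : X} {vv : Option V} {m : P × X × V}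
    (hm : Sees f t m) (ht : isReadAt f t p x vv) : ∃ s < t, dAt f p m.1 m.2.1 m.2.2 s := by
  rcases hm with ⟨p', x', vv', ht', hs⟩ | ⟨p', x', v', ht', -⟩
  · cases ht.symm.trans ht'
    exact hs
  · cases ht.symm.trans ht'

theorem Sees.deliveredBefore {t : ℕ} {q : P} {x : X} {v : V} {m : P × X × V}
    (hm : Sees f t m) (ht : isWriteAt f t q x v) : DeliveredBefore f m (q, x, v) := by
  rcases hm with ⟨p', x', vv', ht', -⟩ | ⟨p', x', v', ht', hdb⟩
  · cases ht.symm.trans ht'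
  · cases ht.symm.trans ht'
    exact hdb

theorem eq_or_deliveredBefore_of_isWriteAt {t : ℕ} {q : P} {x : X} {v : V} {m : P × X × V}
    (ht : isWriteAt f t q x v) (hm : Sees f t m ∨ isWriteAt f t m.1 m.2.1 m.2.2) :
    m = (q, x, v) ∨ DeliveredBefore f m (q, x, v) := by
  rcases hm with hm | ht'
  · exact Or.inr (hm.deliveredBefore ht)
  · have := ht.symm.trans ht'
    simp only [Option.some.injEq, AEvent.invWrite.injEq] at this
    obtain ⟨hq, hx, hv⟩ := this
    exact Or.inl (by rw [hq, hx, hv])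

theorem lt_of_step_of_not_isWrite {a b : ℕ}
    (h : procOrder f a b ∨ readFrom f a b ∨ wwLink G f a b) (ha : ¬ isWrite f a) : a < b := by
  rcases h with ⟨hab, -⟩ | ⟨q, -, x, v, hw, -⟩ | ⟨q, -, x, -, v, -, hw, -⟩
  · exact hab
  all_goals exact absurd ⟨q, x, v, hw⟩ ha

/-- Edges out of reads are process-order edges, so a path either moves forward in time or
passes through a write. -/
theorem lt_or_exists_isWrite_of_causalHG {a b : ℕ} (h : causalHG G f a b) :
    a < b ∨ ∃ w, isWrite f w ∧ (a = w ∨ causalHG G f a w) ∧ causalHG G f w b := by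
  induction h using Relation.TransGen.head_induction_on with
  | @single a hab =>
    by_cases ha : isWrite f a
    · exact Or.inr ⟨a, ha, Or.inl rfl, .single hab⟩
    · exact Or.inl (lt_of_step_of_not_isWrite hab ha)
  | @head a c hac hcb ih =>
    by_cases ha : isWrite f a
    · exact Or.inr ⟨a, ha, Or.inl rfl, .head hac hcb⟩
    have hlt := lt_of_step_of_not_isWrite hac ha
    rcases ih with hcb' | ⟨w, hw, hcw, hwb⟩
    · exact Or.inl (hlt.trans hcb')
    · refine Or.inr ⟨w, hw, Or.inr ?_, hwb⟩
      rcases hcw with rfl | hcw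
      · exact .single hac
      · exact .head hac hcw

theorem causalHG_of_causalH {a b : ℕ} (h : causalH f a b) : causalHG G f a b :=
  Relation.TransGen.mono (fun _ _ => Or.imp_right Or.inl) _ _ h

theorem causalHG_total_of_same_writer {a b : ℕ} {p : P} {x x' : X} {v v' : V} (hab : a ≠ b)
    (ha : isWriteAt f a p x v) (hb : isWriteAt f b p x' v') :
    causalHG G f a b ∨ causalHG G f b a := by
  rcases hab.lt_or_gt with h | h
  · exact Or.inl (.single (Or.inl ⟨h, p, Or.inr ⟨x, v, ha⟩, Or.inr ⟨x', v', hb⟩⟩))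
  · exact Or.inr (.single (Or.inl ⟨h, p, Or.inr ⟨x', v', hb⟩, Or.inr ⟨x, v, ha⟩⟩))

end Trace

section Exec

variable {P X V : Type} {G : SimpleGraph P} (E : Exec P X V G)

theorem DeliveredBefore.irrefl (m : P × X × V) : ¬ DeliveredBefore E.ev m m := by
  rintro ⟨⟨t, hb⟩, h⟩
  obtain ⟨s, hs⟩ := E.termination t _ _ _ hb m.1
  exact lt_irrefl s (h _ _ _ hs hs)

variable {E}

theorem DeliveredBefore.trans {m₁ m₂ m₃ : P × X × V} (h₁₂ : DeliveredBefore E.ev m₁ m₂)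
    (h₂₃ : DeliveredBefore E.ev m₂ m₃) : DeliveredBefore E.ev m₁ m₃ := by
  refine ⟨h₁₂.1, fun r t₁ t₃ hd₁ hd₃ => ?_⟩
  obtain ⟨t, hb⟩ := h₂₃.1
  obtain ⟨t₂, hd₂⟩ := E.termination t _ _ _ hb r
  exact (h₁₂.2 r t₁ t₂ hd₁ hd₂).trans (h₂₃.2 r t₂ t₃ hd₂ hd₃)

theorem DeliveredBefore.exists_dAt_lt {m m' : P × X × V} {r : P} {s : ℕ}
    (h : DeliveredBefore E.ev m m') (hd : dAt E.ev r m'.1 m'.2.1 m'.2.2 s) :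
    ∃ s' < s, dAt E.ev r m.1 m.2.1 m.2.2 s' := by
  obtain ⟨t, hb⟩ := h.1
  obtain ⟨s', hd'⟩ := E.termination t _ _ _ hb r
  exact ⟨s', h.2 r s' s hd' hd, hd'⟩

/-- Causal order of the broadcast, with simultaneous deliveries ruled out by distinct
values. -/
theorem deliveredBefore_of_mCausal {m m' : P × X × V} (h : MCausal E.ev m m')
    (hv : m.2.2 ≠ m'.2.2) (hb : ∃ t, bAt E.ev m.1 m.2.1 m.2.2 t) :
    DeliveredBefore E.ev m m' := by
  refine ⟨hb, fun r t t' hd hd' => ?_⟩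
  rcases lt_trichotomy t t' with hlt | rfl | hgt
  · exact hlt
  · have := hd.symm.trans hd'
    simp only [Option.some.injEq, AEvent.deliver.injEq] at this
    exact absurd this.2.2.2 hv
  · exact absurd ⟨r, t', t, hgt, hd', hd⟩ (E.causalOrder m m' h)

theorem val_ne_of_isWriteAt {a b : ℕ} {q q' : P} {x x' : X} {v v' : V}
    (ha : isWriteAt E.ev a q x v) (hb : isWriteAt E.ev b q' x' v') (hab : a ≠ b) : v ≠ v' := by
  rintro rfl
  exact hab (E.distinctValues a b q q' x x' v ha hb)

theorem lt_of_isWriteAt_of_dAt_self {t s : ℕ} {p : P} {x : X} {v : V}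
    (hb : isWriteAt E.ev t p x v) (hd : dAt E.ev p p x v s) : t < s := by
  obtain ⟨td, htd, hdtd, -⟩ := E.blockingWrite t p x v hb
  rwa [E.integrity p p x v s td hd hdtd]

/-- Otherwise the delivered message would be the writer's own, delivered before its
broadcast. -/
theorem val_ne_of_dAt_of_isWriteAt {s b : ℕ} {p q : P} {x x' : X} {v v' : V}
    (hd : dAt E.ev p q x v s) (hb : isWriteAt E.ev b p x' v') (hsb : s < b) : v ≠ v' := by
  rintro rfl
  obtain ⟨t, ht⟩ := E.validity s p q x v hd
  cases E.distinctValues t b q p x x' v ht hb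
  cases ht.symm.trans hb
  exact (lt_of_isWriteAt_of_dAt_self hb hd).asymm hsb

theorem exists_dAt_self_lt_of_isOpOf {a c : ℕ} {p : P} {x : X} {v : V}
    (ha : isWriteAt E.ev a p x v) (hc : isOpOf E.ev c p) (hac : a < c) :
    ∃ s < c, dAt E.ev p p x v s := by
  obtain ⟨td, hatd, hd, hblock⟩ := E.blockingWrite a p x v ha
  refine ⟨td, ?_, hd⟩
  by_contra! hle
  rcases hle.eq_or_lt with rfl | hlt
  · rcases hc with ⟨x', vv, hc⟩ | ⟨x', v', hc⟩ <;> cases hc.symm.trans hd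
  · rcases hc with ⟨x', vv, hc⟩ | ⟨x', v', hc⟩
    · exact (hblock c hac hlt).2 x' vv hc
    · exact (hblock c hac hlt).1 x' v' hc

theorem exists_last_dAt_of_val_eq_some {t : ℕ} {p : P} {x : X} {v : V}
    (h : E.val t p x = some v) :
    ∃ s < t, ∃ q, dAt E.ev p q x v s ∧
      ∀ s', s < s' → s' < t → ∀ q' v', ¬ dAt E.ev p q' x v' s' := by
  induction t with
  | zero => simp [E.val0] at h
  | succ n ih =>
    by_cases hd : ∃ q w, E.ev n = some (.deliver p q x w)
    · obtain ⟨q, w, hq⟩ := hd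
      have hw := E.valDeliv n p q x w hq
      rw [h, Option.some.injEq] at hw
      subst hw
      exact ⟨n, n.lt_succ_self, q, hq, fun s' h₁ h₂ => by omega⟩
    · rw [E.valFrame n p x hd] at h
      obtain ⟨s, hs, q, hsd, hlast⟩ := ih h
      refine ⟨s, hs.trans n.lt_succ_self, q, hsd, fun s' h₁ h₂ q' v' hd' => ?_⟩
      rcases Nat.lt_succ_iff_lt_or_eq.1 h₂ with h₂ | rfl
      · exact hlast s' h₁ h₂ q' v' hd'
      · exact hd ⟨q', v', hd'⟩

theorem val_ne_none_of_dAt {s t : ℕ} {p q : P} {x : X} {v : V}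
    (hd : dAt E.ev p q x v s) (hst : s < t) : E.val t p x ≠ none := by
  induction t, hst using Nat.le_induction with
  | base => simp [E.valDeliv s p q x v hd]
  | succ n _ ih =>
    by_cases hn : ∃ q' v', E.ev n = some (.deliver p q' x v')
    · obtain ⟨q', v', hn⟩ := hn
      simp [E.valDeliv n p q' x v' hn]
    · rwa [E.valFrame n p x hn]

/-- Values identify their write. -/
theorem exists_dAt_lt_of_readFrom {a b : ℕ} {q p : P} {x : X} {v : V}
    (ha : isWriteAt E.ev a q x v) (hb : isReadAt E.ev b p x (some v)) :
    ∃ s < b, dAt E.ev p q x v s := by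
  obtain ⟨s, hs, q', hd, -⟩ :=
    exists_last_dAt_of_val_eq_some (E.readsLocal b p x (some v) hb).symm
  obtain ⟨a', ha'⟩ := E.validity s p q' x v hd
  cases E.distinctValues a' a q' q x x v ha' ha
  cases ha'.symm.trans ha
  exact ⟨s, hs, hd⟩

theorem exists_dAt_le_of_isWriteAt {a s : ℕ} {q r : P} {x : X} {v : V} {m : P × X × V}
    (ha : isWriteAt E.ev a q x v) (hm : Sees E.ev a m ∨ isWriteAt E.ev a m.1 m.2.1 m.2.2)
    (hd : dAt E.ev r q x v s) : ∃ s' ≤ s, dAt E.ev r m.1 m.2.1 m.2.2 s' := by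
  rcases eq_or_deliveredBefore_of_isWriteAt ha hm with rfl | hdb
  · exact ⟨s, le_rfl, hd⟩
  · obtain ⟨s', hs', hd'⟩ := hdb.exists_dAt_lt hd
    exact ⟨s', hs'.le, hd'⟩

theorem deliveredBefore_of_isWriteAt {a : ℕ} {q : P} {x : X} {v : V} {m m' : P × X × V}
    (ha : isWriteAt E.ev a q x v) (hm : Sees E.ev a m ∨ isWriteAt E.ev a m.1 m.2.1 m.2.2)
    (h : DeliveredBefore E.ev (q, x, v) m') : DeliveredBefore E.ev m m' := by
  rcases eq_or_deliveredBefore_of_isWriteAt ha hm with rfl | hdb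
  · exact h
  · exact hdb.trans h

theorem sees_of_procOrder {a b : ℕ} {m : P × X × V} (hab : procOrder E.ev a b)
    (hm : Sees E.ev a m ∨ isWriteAt E.ev a m.1 m.2.1 m.2.2) : Sees E.ev b m := by
  obtain ⟨hlt, p, ⟨x, vv, ha⟩ | ⟨x, v, ha⟩, hpb⟩ := hab
  · obtain ⟨s, hs, hd⟩ := (hm.resolve_right fun h => by cases ha.symm.trans h).exists_dAt_lt ha
    rcases hpb with ⟨x', vv', hb⟩ | ⟨x', v', hb⟩
    · exact Or.inl ⟨p, x', vv', hb, s, hs.trans hlt, hd⟩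
    · exact Or.inr ⟨p, x', v', hb, deliveredBefore_of_mCausal
          (.delivered (hs.trans hlt) hd hb) (val_ne_of_dAt_of_isWriteAt hd hb (hs.trans hlt))
        (E.validity s p _ _ _ hd)⟩
  · rcases hpb with ⟨x', vv', hb⟩ | ⟨x', v', hb⟩
    · obtain ⟨s, hs, hd⟩ := exists_dAt_self_lt_of_isOpOf ha (Or.inl ⟨x', vv', hb⟩) hlt
      obtain ⟨s', hs', hd'⟩ := exists_dAt_le_of_isWriteAt ha hm hd
      exact Or.inl ⟨p, x', vv', hb, s', hs'.trans_lt hs, hd'⟩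
    · exact Or.inr ⟨p, x', v', hb, deliveredBefore_of_isWriteAt ha hm
        (deliveredBefore_of_mCausal (.sameProc hlt ha hb)
          (val_ne_of_isWriteAt ha hb hlt.ne) ⟨a, ha⟩)⟩

theorem sees_of_readFrom {a b : ℕ} {m : P × X × V} (hab : readFrom E.ev a b)
    (hm : Sees E.ev a m ∨ isWriteAt E.ev a m.1 m.2.1 m.2.2) : Sees E.ev b m := by
  obtain ⟨q, p, x, v, ha, hb⟩ := hab
  obtain ⟨s, hs, hd⟩ := exists_dAt_lt_of_readFrom ha hb
  obtain ⟨s', hs', hd'⟩ := exists_dAt_le_of_isWriteAt ha hm hd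
  exact Or.inl ⟨p, x, some v, hb, s', hs'.trans_lt hs, hd'⟩

theorem sees_of_wwLink {a b : ℕ} {m : P × X × V} (hab : wwLink G E.ev a b)
    (hm : Sees E.ev a m ∨ isWriteAt E.ev a m.1 m.2.1 m.2.2) : Sees E.ev b m := by
  obtain ⟨p, q, x, x', v, v', ha, hb, -, -, -, hord⟩ := hab
  exact Or.inr ⟨q, x', v', hb, deliveredBefore_of_isWriteAt ha hm ⟨⟨a, ha⟩, hord⟩⟩

theorem sees_of_causalHG {a b : ℕ} {m : P × X × V} (hab : causalHG G E.ev a b)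
    (hm : Sees E.ev a m ∨ isWriteAt E.ev a m.1 m.2.1 m.2.2) : Sees E.ev b m := by
  have step : ∀ {a b}, (procOrder E.ev a b ∨ readFrom E.ev a b ∨ wwLink G E.ev a b) →
      Sees E.ev a m ∨ isWriteAt E.ev a m.1 m.2.1 m.2.2 → Sees E.ev b m := fun h hm =>
    h.elim (sees_of_procOrder · hm) (·.elim (sees_of_readFrom · hm) (sees_of_wwLink · hm))
  induction hab with
  | single h => exact step h hm
  | tail _ h ih => exact step h (Or.inl ih)

theorem deliveredBefore_of_causalHG {a b : ℕ} {q q' : P} {x x' : X} {v v' : V}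
    (hab : causalHG G E.ev a b) (ha : isWriteAt E.ev a q x v) (hb : isWriteAt E.ev b q' x' v') :
    DeliveredBefore E.ev (q, x, v) (q', x', v') :=
  (sees_of_causalHG hab (Or.inr ha)).deliveredBefore hb

theorem exists_dAt_lt_of_causalHG {a b : ℕ} {q p : P} {x x' : X} {v : V} {vv : Option V}
    (hab : causalHG G E.ev a b) (ha : isWriteAt E.ev a q x v) (hb : isReadAt E.ev b p x' vv) :
    ∃ s < b, dAt E.ev p q x v s :=
  (sees_of_causalHG hab (m := (q, x, v)) (Or.inr ha)).exists_dAt_lt hb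

theorem causalHG_irrefl (a : ℕ) : ¬ causalHG G E.ev a a := by
  intro h
  obtain ⟨w, ⟨q, x, v, hw⟩, haw, hwa⟩ :=
    (lt_or_exists_isWrite_of_causalHG h).resolve_left (lt_irrefl a)
  have hcycle : causalHG G E.ev w w := by
    rcases haw with rfl | haw
    · exact hwa
    · exact hwa.trans haw
  exact DeliveredBefore.irrefl E _ (deliveredBefore_of_causalHG hcycle hw hw)

/-- The last delivery to `x` at the reader before the read is the value it returns; an
overwriting write would have been delivered there after it. -/
theorem causalHG_read_some {t : ℕ} {p : P} {x : X} {v : V}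
    (ht : isReadAt E.ev t p x (some v)) :
    ∃ (w : ℕ) (q : P), isWriteAt E.ev w q x v ∧ causalHG G E.ev w t ∧
      ¬ ∃ (w' : ℕ) (q' : P) (v' : V), isWriteAt E.ev w' q' x v' ∧
        causalHG G E.ev w w' ∧ causalHG G E.ev w' t := by
  obtain ⟨s, -, q, hd, hlast⟩ :=
    exists_last_dAt_of_val_eq_some (E.readsLocal t p x (some v) ht).symm
  obtain ⟨w, hw⟩ := E.validity s p q x v hd
  refine ⟨w, q, hw, .single (Or.inr (Or.inl ⟨q, p, x, v, hw, ht⟩)), ?_⟩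
  rintro ⟨w', q', v', hw', hww', hw't⟩
  obtain ⟨s', hs't, hd'⟩ := exists_dAt_lt_of_causalHG hw't hw' ht
  exact hlast s' ((deliveredBefore_of_causalHG hww' hw hw').2 p s s' hd hd') hs't q' v' hd'

theorem causalHG_read_none {t : ℕ} {p : P} {x : X} (ht : isReadAt E.ev t p x none) :
    ¬ ∃ (w : ℕ) (q : P) (v : V), isWriteAt E.ev w q x v ∧ causalHG G E.ev w t := by
  rintro ⟨w, q, v, hw, hwt⟩
  obtain ⟨s, hs, hd⟩ := exists_dAt_lt_of_causalHG hwt hw ht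
  exact val_ne_none_of_dAt hd hs (E.readsLocal t p x none ht).symm

/-- `G`-delivery order, with simultaneous deliveries ruled out by distinct values. -/
theorem deliveryOrder_total_of_adj {a b : ℕ} {p q : P} {x x' : X} {v v' : V} (hpq : G.Adj p q)
    (hab : a ≠ b) (ha : isWriteAt E.ev a p x v) (hb : isWriteAt E.ev b q x' v') :
    (∀ (r : P) (t₁ t₂ : ℕ), dAt E.ev r p x v t₁ → dAt E.ev r q x' v' t₂ → t₁ < t₂) ∨
      ∀ (r : P) (t₁ t₂ : ℕ), dAt E.ev r q x' v' t₁ → dAt E.ev r p x v t₂ → t₁ < t₂ := by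
  have hvv := val_ne_of_isWriteAt ha hb hab
  have hne : ∀ {r : P} {t₁ t₂ : ℕ}, dAt E.ev r p x v t₁ → dAt E.ev r q x' v' t₂ → t₁ ≠ t₂ := by
    rintro r t₁ t₂ hd hd' rfl
    have := hd.symm.trans hd'
    simp only [Option.some.injEq, AEvent.deliver.injEq] at this
    exact hvv this.2.2.2
  by_contra! ⟨⟨r, t₁, t₂, hd₁, hd₂, hle⟩, ⟨r', s₁, s₂, hd₁', hd₂', hle'⟩⟩
  exact E.gOrder p q hpq x x' v v' a b ha hb
    ⟨r', s₂, s₁, lt_of_le_of_ne hle' (hne hd₂' hd₁'), hd₂', hd₁'⟩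
    ⟨r, t₂, t₁, lt_of_le_of_ne hle (hne hd₁ hd₂).symm, hd₂, hd₁⟩

theorem causalHG_total_of_adj {a b : ℕ} {p q : P} {x x' : X} {v v' : V} (hpq : G.Adj p q)
    (hab : a ≠ b) (ha : isWriteAt E.ev a p x v) (hb : isWriteAt E.ev b q x' v') :
    causalHG G E.ev a b ∨ causalHG G E.ev b a := by
  by_cases h₁ : causalH E.ev a b
  · exact Or.inl (causalHG_of_causalH h₁)
  by_cases h₂ : causalH E.ev b a
  · exact Or.inr (causalHG_of_causalH h₂)
  rcases deliveryOrder_total_of_adj hpq hab ha hb with hord | hord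
  · exact Or.inl (.single (Or.inr (Or.inr ⟨p, q, x, x', v, v', ha, hb, hpq, h₁, h₂, hord⟩)))
  · exact Or.inr (.single (Or.inr (Or.inr ⟨q, p, x', x, v', v, hb, ha, hpq.symm, h₂, h₁, hord⟩)))

end Exec

/-- **Lemma: `⇝*_{H,G}` is a causal order.**  For any history produced by an
execution of Algorithm 2 over Algorithm 1, the extension `⇝*_{H,G}` of `⇝_H`
by the `ww` links is acyclic, totally orders the write operations of every
pair of `G`-neighboring processes, and remains a causal order: no read returns
an overwritten value with respect to `⇝*_{H,G}`. -/
theorem causalHG_is_causal_order {P X V : Type} {G : SimpleGraph P}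
    (E : Exec P X V G) :
    IsCausalOrderTrace E.ev (causalHG G E.ev) ∧
    (∀ p q : P, G.Adj p q → ∀ a b : ℕ, a ≠ b →
      (∃ (x : X) (v : V), isWriteAt E.ev a p x v ∨ isWriteAt E.ev a q x v) →
      (∃ (x : X) (v : V), isWriteAt E.ev b p x v ∨ isWriteAt E.ev b q x v) →
      causalHG G E.ev a b ∨ causalHG G E.ev b a) := by
  refine ⟨⟨causalHG_irrefl, fun _ _ _ => .trans, fun _ _ h => .single (Or.inl h),
    fun _ _ _ _ => causalHG_read_some, fun _ _ _ => causalHG_read_none⟩, ?_⟩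
  rintro p q hpq a b hab ⟨x, v, ha | ha⟩ ⟨x', v', hb | hb⟩
  · exact causalHG_total_of_same_writer hab ha hb
  · exact causalHG_total_of_adj hpq hab ha hb
  · exact causalHG_total_of_adj hpq.symm hab ha hb
  · exact causalHG_total_of_same_writer hab ha hb

end FisheyeReg
end

section
/- (Theorem 2) Algorithm 2 (the fast-read register algorithm built on top of the G-fisheye (SC,CC)-broadcast of Algorithm 1) implements G-fisheye (SC,CC)-consistency: every history Ĥ produced by an execution of Algorithm 2 is G-fisheye (SC,CC)-consistent. -/
namespace FisheyeReg

/-- `S` is a (strict) linear order on the sub-history with domain `D`. -/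
def LinearOnTrace {P X V : Type} (_f : ℕ → Option (AEvent P X V))
    (D : ℕ → Prop) (S : ℕ → ℕ → Prop) : Prop :=
  (∀ a b, S a b → D a ∧ D b) ∧
  (∀ a, ¬ S a a) ∧
  (∀ a b c, S a b → S b c → S a c) ∧
  (∀ a b, D a → D b → a ≠ b → S a b ∨ S b a)

/-- The sub-history with domain `D`, linearly ordered by `S`, is legal: every
read of a register in it returns the value of the `S`-latest preceding write to
that register in `D` (or `⊥` if there is none). -/
def LegalOnTrace {P X V : Type} (f : ℕ → Option (AEvent P X V))
    (D : ℕ → Prop) (S : ℕ → ℕ → Prop) : Prop :=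
  (∀ (t : ℕ) (p : P) (x : X) (v : V), D t → isReadAt f t p x (some v) →
    ∃ (w : ℕ) (q : P), D w ∧ isWriteAt f w q x v ∧ S w t ∧
      ¬ ∃ (w' : ℕ) (q' : P) (v' : V), D w' ∧ isWriteAt f w' q' x v' ∧ S w w' ∧ S w' t) ∧
  (∀ (t : ℕ) (p : P) (x : X), D t → isReadAt f t p x none →
    ¬ ∃ (w : ℕ) (q : P) (v : V), D w ∧ isWriteAt f w q x v ∧ S w t)

/-- The domain of `Ĥ|(p+W)`: all operations of process `p` plus the write
operations of all processes. -/
def Dom {P X V : Type} (f : ℕ → Option (AEvent P X V)) (p : P) : ℕ → Prop :=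
  fun t => isOpOf f t p ∨ isWrite f t

/-!
Every process `p` has a view of the whole history: a write sits where its `WRITE` message is
toco-delivered at `p`, and a read by `q` sits just after the `p`-deliveries of the messages that
`q` had received before it. Take `⇝*` to be "earlier in every view", a strict order by
construction, and `Ŝ_p` to be the view of `p` restricted to `Ĥ|(p+W)`, which is `p`'s real
timeline. Causal order of the broadcast, together with writes blocking until their local
delivery, puts `⇝_H` inside `⇝*`; `G`-delivery order makes writes of neighbours comparable; and a
read is legal in its own process's view because it returns the last value delivered there.
-/

section Events

variable {P X V : Type} {f : ℕ → Option (AEvent P X V)} {t : ℕ} {p p' q q' : P} {x x' : X}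
  {v v' : V} {ov ov' : Option V}

lemma isWriteAt.inj (h : isWriteAt f t q x v) (h' : isWriteAt f t q' x' v') :
    q = q' ∧ x = x' ∧ v = v' := by
  rw [isWriteAt] at h h'
  simpa [h] using h'

lemma isReadAt.inj (h : isReadAt f t p x ov) (h' : isReadAt f t p' x' ov') :
    p = p' ∧ x = x' ∧ ov = ov' := by
  rw [isReadAt] at h h'
  simpa [h] using h'

lemma dAt.inj (h : dAt f p q x v t) (h' : dAt f p' q' x' v' t) :
    p = p' ∧ q = q' ∧ x = x' ∧ v = v' := by
  rw [dAt] at h h'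
  simpa [h] using h'

lemma isWriteAt.not_isReadAt (h : isWriteAt f t q x v) : ¬ isReadAt f t p x' ov := by
  rw [isWriteAt] at h
  simp [isReadAt, h]

lemma isReadAt.not_dAt (h : isReadAt f t p x ov) : ¬ dAt f p' q x' v t := by
  rw [isReadAt] at h
  simp [dAt, h]

lemma isOpOf.eq_of_isReadAt (h : isOpOf f t p) (hr : isReadAt f t q x ov) : p = q := by
  rcases h with ⟨_, _, hr'⟩ | ⟨_, _, hw⟩
  exacts [(hr'.inj hr).1, (hw.not_isReadAt hr).elim]

lemma Dom.exists_isOpOf (h : Dom f p t) : ∃ q, isOpOf f t q := by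
  rcases h with h | ⟨q, x, v, hw⟩
  exacts [⟨p, h⟩, ⟨q, .inr ⟨x, v, hw⟩⟩]

lemma Dom.eq_of_isReadAt (h : Dom f p t) (hr : isReadAt f t q x ov) : q = p := by
  rcases h with h | ⟨_, _, _, hw⟩
  exacts [(h.eq_of_isReadAt hr).symm, (hw.not_isReadAt hr).elim]

end Events

section Execution

variable {P X V : Type} {G : SimpleGraph P} (E : Exec P X V G)
  {t s : ℕ} {p q q' : P} {x x' : X} {v v' : V} {ov : Option V}

open Classical in
/-- The junk value `0` only occurs for messages that are never broadcast (Termination). -/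
noncomputable def deliveryTime (p q : P) (x : X) (v : V) : ℕ :=
  if h : ∃ s, dAt E.ev p q x v s then h.choose else 0

lemma deliveryTime_eq (hd : dAt E.ev p q x v s) : deliveryTime E p q x v = s := by
  have h : ∃ s, dAt E.ev p q x v s := ⟨s, hd⟩
  rw [deliveryTime, dif_pos h]
  exact E.integrity p q x v _ _ h.choose_spec hd

lemma dAt_deliveryTime (hb : bAt E.ev q x v t) (p : P) :
    dAt E.ev p q x v (deliveryTime E p q x v) := by
  obtain ⟨s, hd⟩ := E.termination t q x v hb p
  rwa [deliveryTime_eq E hd]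

lemma exists_last_delivery_of_val_eq_some (h : E.val t p x = some v) :
    ∃ q s, s < t ∧ dAt E.ev p q x v s ∧
      ∀ s' q' v', s < s' → s' < t → ¬ dAt E.ev p q' x v' s' := by
  induction t with
  | zero => simp [E.val0] at h
  | succ t ih =>
    by_cases hd : ∃ q w, E.ev t = some (.deliver p q x w)
    · obtain ⟨q, w, hw⟩ := hd
      obtain rfl : w = v := Option.some.inj ((E.valDeliv t p q x w hw).symm.trans h)
      exact ⟨q, t, t.lt_succ_self, hw, fun s' _ _ h1 h2 => absurd h1 (by omega)⟩
    · obtain ⟨q, s, hs, hdel, hlast⟩ := ih ((E.valFrame t p x hd).symm.trans h)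
      refine ⟨q, s, by omega, hdel, fun s' q' v' h1 h2 hdel' => ?_⟩
      rcases Nat.lt_succ_iff_lt_or_eq.mp h2 with h2 | rfl
      exacts [hlast s' q' v' h1 h2 hdel', hd ⟨q', v', hdel'⟩]

lemma not_dAt_of_val_eq_none (h : E.val t p x = none) (hs : s < t) : ¬ dAt E.ev p q x v s := by
  induction t with
  | zero => omega
  | succ t ih =>
    by_cases hd : ∃ q w, E.ev t = some (.deliver p q x w)
    · obtain ⟨q, w, hw⟩ := hd
      simp [E.valDeliv t p q x w hw] at h
    · rcases Nat.lt_succ_iff_lt_or_eq.mp hs with hs | rfl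
      exacts [ih ((E.valFrame t p x hd).symm.trans h) hs, fun hdel => hd ⟨q, v, hdel⟩]

lemma deliveryTime_self_lt_of_isReadAt (hw : isWriteAt E.ev t q x v)
    (hr : isReadAt E.ev s q x' ov) (hts : t < s) : deliveryTime E q q x v < s := by
  obtain ⟨td, htd, hd, hblock⟩ := E.blockingWrite t q x v hw
  rw [deliveryTime_eq E hd]
  rcases lt_trichotomy td s with h | rfl | h
  · exact h
  · exact (hr.not_dAt hd).elim
  · exact ((hblock s hts h).2 x' ov hr).elim

lemma deliveryTime_lt_of_mcausal (hM : MCausal E.ev (q, x, v) (q', x', v'))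
    (hne : (q, x, v) ≠ (q', x', v')) (hb : bAt E.ev q x v t) (hb' : bAt E.ev q' x' v' s)
    (p : P) : deliveryTime E p q x v < deliveryTime E p q' x' v' := by
  have hd := dAt_deliveryTime E hb p
  have hd' := dAt_deliveryTime E hb' p
  rcases lt_trichotomy (deliveryTime E p q x v) (deliveryTime E p q' x' v') with h | h | h
  · exact h
  · rw [h] at hd
    obtain ⟨-, rfl, rfl, rfl⟩ := hd.inj hd'
    exact (hne rfl).elim
  · exact (E.causalOrder _ _ hM ⟨p, _, _, h, hd', hd⟩).elim

lemma deliveryTime_lt_of_isWriteAt_of_lt (hw : isWriteAt E.ev t q x v)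
    (hw' : isWriteAt E.ev s q x' v') (hts : t < s) (p : P) :
    deliveryTime E p q x v < deliveryTime E p q x' v' := by
  refine deliveryTime_lt_of_mcausal E (.sameProc hts hw hw') ?_ hw hw' p
  intro h
  cases h
  exact hts.ne (E.distinctValues _ _ _ _ _ _ _ hw hw')

lemma deliveryTime_lt_of_dAt_of_isWriteAt (hd : dAt E.ev q q' x v s)
    (hw : isWriteAt E.ev t q x' v') (hst : s < t) (p : P) :
    deliveryTime E p q' x v < deliveryTime E p q x' v' := by
  obtain ⟨t', hb⟩ := E.validity s q q' x v hd
  refine deliveryTime_lt_of_mcausal E (.delivered hst hd hw) ?_ hb hw p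
  intro h
  cases h
  obtain ⟨td, htd, hd', -⟩ := E.blockingWrite _ _ _ _ hw
  exact (hst.trans htd).ne (E.integrity _ _ _ _ _ _ hd hd')

lemma deliveryTime_lt_of_adj (hadj : G.Adj q q') (hw : isWriteAt E.ev t q x v)
    (hw' : isWriteAt E.ev s q' x' v') {r : P}
    (hr : deliveryTime E r q x v < deliveryTime E r q' x' v') (p : P) :
    deliveryTime E p q x v < deliveryTime E p q' x' v' := by
  have hd := dAt_deliveryTime E hw p
  have hd' := dAt_deliveryTime E hw' p
  rcases lt_trichotomy (deliveryTime E p q x v) (deliveryTime E p q' x' v') with h | h | h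
  · exact h
  · rw [h] at hd
    exact (hadj.ne (hd.inj hd').2.1).elim
  · exact (E.gOrder q q' hadj x x' v v' t s hw hw'
      ⟨r, _, _, hr, dAt_deliveryTime E hw r, dAt_deliveryTime E hw' r⟩
      ⟨p, _, _, h, hd', hd⟩).elim

end Execution

section Views

variable {P X V : Type} {G : SimpleGraph P} (E : Exec P X V G)
  {t s w : ℕ} {p q q' : P} {x x' : X} {v v' : V} {ov ov' : Option V}

open Classical in
/-- `frontier E p q t` is one more than the latest delivery at `p` of a message that `q` had
delivered before `t` (and `0` if there is none). -/
noncomputable def frontier (p q : P) (t : ℕ) : ℕ :=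
  (Finset.range t).sup fun s => match E.ev s with
    | some (.deliver r q' x v) => if r = q then deliveryTime E p q' x v + 1 else 0
    | _ => 0

lemma deliveryTime_lt_frontier (hd : dAt E.ev q q' x v s) (hs : s < t) (p : P) :
    deliveryTime E p q' x v < frontier E p q t := by
  refine Nat.lt_of_succ_le (Finset.le_sup_of_le (Finset.mem_range.2 hs) ?_)
  rw [dAt] at hd
  simp [hd]

lemma frontier_le {K : ℕ}
    (h : ∀ s q' x v, s < t → dAt E.ev q q' x v s → deliveryTime E p q' x v < K) :
    frontier E p q t ≤ K := by
  refine Finset.sup_le fun s hs => ?_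
  split
  · next r q' x v hs' =>
    split_ifs with hr
    · subst hr
      exact h s q' x v (Finset.mem_range.1 hs) hs'
    · exact Nat.zero_le K
  · exact Nat.zero_le K

lemma frontier_mono (p q : P) : Monotone (frontier E p q) :=
  fun _ _ h => Finset.sup_mono (Finset.range_mono h)

lemma frontier_self_le (p : P) (t : ℕ) : frontier E p p t ≤ t :=
  frontier_le E fun _ _ _ _ hs hd => (deliveryTime_eq E hd).trans_lt hs

/-- Reads with equal frontiers are ordered by their instants; the `+ 1` on writes puts reads with
an empty frontier before every write. -/
noncomputable def viewKey (p : P) (t : ℕ) : ℕ ×ₗ ℕ :=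
  match E.ev t with
  | some (.invWrite q x v) => toLex (deliveryTime E p q x v + 1, 0)
  | some (.read q _ _) => toLex (frontier E p q t, t + 1)
  | _ => toLex (0, 0)

lemma viewKey_of_isWriteAt (hw : isWriteAt E.ev t q x v) (p : P) :
    viewKey E p t = toLex (deliveryTime E p q x v + 1, 0) := by
  rw [isWriteAt] at hw
  simp [viewKey, hw]

lemma viewKey_of_isReadAt (hr : isReadAt E.ev t q x ov) (p : P) :
    viewKey E p t = toLex (frontier E p q t, t + 1) := by
  rw [isReadAt] at hr
  simp [viewKey, hr]

lemma viewKey_lt_viewKey_of_isWriteAt_iff (hw : isWriteAt E.ev t q x v)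
    (hw' : isWriteAt E.ev s q' x' v') (p : P) :
    viewKey E p t < viewKey E p s ↔ deliveryTime E p q x v < deliveryTime E p q' x' v' := by
  simp [viewKey_of_isWriteAt E hw, viewKey_of_isWriteAt E hw', Prod.Lex.toLex_lt_toLex]

lemma viewKey_write_lt_viewKey_read (hw : isWriteAt E.ev t q x v)
    (hr : isReadAt E.ev s q' x' ov) {d : ℕ} (hd : dAt E.ev q' q x v d) (hds : d < s) (p : P) :
    viewKey E p t < viewKey E p s := by
  rw [viewKey_of_isWriteAt E hw, viewKey_of_isReadAt E hr, Prod.Lex.toLex_lt_toLex']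
  exact ⟨deliveryTime_lt_frontier E hd hds p, fun _ => s.succ_pos⟩

lemma viewKey_read_lt_viewKey_write (hr : isReadAt E.ev t q x ov)
    (hw : isWriteAt E.ev s q x' v') (hts : t < s) (p : P) :
    viewKey E p t < viewKey E p s := by
  rw [viewKey_of_isReadAt E hr, viewKey_of_isWriteAt E hw, Prod.Lex.toLex_lt_toLex]
  refine Or.inl (Nat.lt_succ_of_le (frontier_le E fun s' _ _ _ hs' hd => ?_))
  exact deliveryTime_lt_of_dAt_of_isWriteAt E hd hw (hs'.trans hts) p

lemma viewKey_read_lt_viewKey_read (hr : isReadAt E.ev t q x ov)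
    (hr' : isReadAt E.ev s q x' ov') (hts : t < s) (p : P) :
    viewKey E p t < viewKey E p s := by
  rw [viewKey_of_isReadAt E hr, viewKey_of_isReadAt E hr', Prod.Lex.toLex_lt_toLex']
  exact ⟨frontier_mono E p q hts.le, fun _ => Nat.succ_lt_succ hts⟩

lemma viewKey_write_lt_viewKey_own_read_iff (hw : isWriteAt E.ev t q x v)
    (hr : isReadAt E.ev s p x' ov) :
    viewKey E p t < viewKey E p s ↔ deliveryTime E p q x v < s := by
  constructor
  · rw [viewKey_of_isWriteAt E hw, viewKey_of_isReadAt E hr, Prod.Lex.toLex_lt_toLex']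
    exact fun h => Nat.lt_of_succ_le (h.1.trans (frontier_self_le E p s))
  · exact fun h => viewKey_write_lt_viewKey_read E hw hr (dAt_deliveryTime E hw p) h p

lemma eq_of_viewKey_eq (p : P) {a b : ℕ} (ha : isOpOf E.ev a q) (hb : isOpOf E.ev b q')
    (h : viewKey E p a = viewKey E p b) : a = b := by
  rcases ha with ⟨_, _, hra⟩ | ⟨_, _, hwa⟩ <;>
    rcases hb with ⟨_, _, hrb⟩ | ⟨_, _, hwb⟩
  · simp only [viewKey_of_isReadAt E hra, viewKey_of_isReadAt E hrb,
      EmbeddingLike.apply_eq_iff_eq, Prod.mk.injEq, Nat.add_right_cancel_iff] at h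
    exact h.2
  · simp [viewKey_of_isReadAt E hra, viewKey_of_isWriteAt E hwb] at h
  · simp [viewKey_of_isWriteAt E hwa, viewKey_of_isReadAt E hrb] at h
  · simp only [viewKey_of_isWriteAt E hwa, viewKey_of_isWriteAt E hwb,
      EmbeddingLike.apply_eq_iff_eq, Prod.mk.injEq, add_left_inj, and_true] at h
    have hd := dAt_deliveryTime E hwa p
    rw [h] at hd
    obtain ⟨-, rfl, rfl, rfl⟩ := hd.inj (dAt_deliveryTime E hwb p)
    exact E.distinctValues _ _ _ _ _ _ _ hwa hwb

lemma exists_last_write_of_isReadAt (hr : isReadAt E.ev t p x (some v)) :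
    ∃ w q s, isWriteAt E.ev w q x v ∧ s < t ∧ dAt E.ev p q x v s ∧
      ∀ s' q' v', s < s' → s' < t → ¬ dAt E.ev p q' x v' s' := by
  obtain ⟨q, s, hs, hd, hlast⟩ :=
    exists_last_delivery_of_val_eq_some E (E.readsLocal t p x _ hr).symm
  obtain ⟨w, hw⟩ := E.validity s p q x v hd
  exact ⟨w, q, s, hw, hs, hd, hlast⟩

lemma viewKey_legal_of_isReadAt_some (hr : isReadAt E.ev t p x (some v)) :
    ∃ w q, isWriteAt E.ev w q x v ∧ viewKey E p w < viewKey E p t ∧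
      ∀ w' q' v', isWriteAt E.ev w' q' x v' → viewKey E p w < viewKey E p w' →
        ¬ viewKey E p w' < viewKey E p t := by
  obtain ⟨w, q, s, hw, hs, hd, hlast⟩ := exists_last_write_of_isReadAt E hr
  have hws := viewKey_write_lt_viewKey_own_read_iff E hw hr
  refine ⟨w, q, hw, hws.2 ((deliveryTime_eq E hd).trans_lt hs), fun w' q' v' hw' h h' => ?_⟩
  rw [viewKey_lt_viewKey_of_isWriteAt_iff E hw hw', deliveryTime_eq E hd] at h
  exact hlast _ q' v' h ((viewKey_write_lt_viewKey_own_read_iff E hw' hr).1 h')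
    (dAt_deliveryTime E hw' p)

lemma viewKey_legal_of_isReadAt_none (hr : isReadAt E.ev t p x none)
    (hw : isWriteAt E.ev w q x v) : ¬ viewKey E p w < viewKey E p t := fun h =>
  not_dAt_of_val_eq_none E (E.readsLocal t p x _ hr).symm
    ((viewKey_write_lt_viewKey_own_read_iff E hw hr).1 h) (dAt_deliveryTime E hw p)

end Views

section Orders

variable {P X V : Type} {G : SimpleGraph P} (E : Exec P X V G) {a b c : ℕ}

/-- The order `⇝*_{H,G}`. -/
def PrecedesInAllViews (a b : ℕ) : Prop :=
  (∃ q, isOpOf E.ev a q) ∧ ∀ p, viewKey E p a < viewKey E p b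

lemma precedesInAllViews_irrefl (a : ℕ) : ¬ PrecedesInAllViews E a a :=
  fun ⟨⟨q, _⟩, h⟩ => lt_irrefl _ (h q)

lemma PrecedesInAllViews.trans (hab : PrecedesInAllViews E a b)
    (hbc : PrecedesInAllViews E b c) : PrecedesInAllViews E a c :=
  ⟨hab.1, fun p => (hab.2 p).trans (hbc.2 p)⟩

lemma precedesInAllViews_of_procOrder (h : procOrder E.ev a b) : PrecedesInAllViews E a b := by
  obtain ⟨hab, q, hopa, hopb⟩ := h
  refine ⟨⟨q, hopa⟩, fun p => ?_⟩
  rcases hopa with ⟨_, _, hra⟩ | ⟨_, _, hwa⟩ <;>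
    rcases hopb with ⟨_, _, hrb⟩ | ⟨_, _, hwb⟩
  · exact viewKey_read_lt_viewKey_read E hra hrb hab p
  · exact viewKey_read_lt_viewKey_write E hra hwb hab p
  · exact viewKey_write_lt_viewKey_read E hwa hrb (dAt_deliveryTime E hwa q)
      (deliveryTime_self_lt_of_isReadAt E hwa hrb hab) p
  · exact (viewKey_lt_viewKey_of_isWriteAt_iff E hwa hwb p).2
      (deliveryTime_lt_of_isWriteAt_of_lt E hwa hwb hab p)

lemma precedesInAllViews_of_readFrom (h : readFrom E.ev a b) : PrecedesInAllViews E a b := by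
  obtain ⟨q, p, x, v, hw, hr⟩ := h
  obtain ⟨w, q', s, hw', hs, hd, -⟩ := exists_last_write_of_isReadAt E hr
  obtain rfl := E.distinctValues _ _ _ _ _ _ _ hw hw'
  obtain ⟨rfl, -, -⟩ := hw.inj hw'
  exact ⟨⟨q, .inr ⟨x, v, hw⟩⟩, viewKey_write_lt_viewKey_read E hw hr hd hs⟩

lemma precedesInAllViews_of_causalH (h : causalH E.ev a b) : PrecedesInAllViews E a b := by
  have step {a b : ℕ} (h : procOrder E.ev a b ∨ readFrom E.ev a b) : PrecedesInAllViews E a b :=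
    h.elim (precedesInAllViews_of_procOrder E) (precedesInAllViews_of_readFrom E)
  induction h with
  | single h => exact step h
  | tail _ h ih => exact ih.trans E (step h)

lemma precedesInAllViews_or_of_adj {q q' : P} {x x' : X} {v v' : V} (hadj : G.Adj q q')
    (hw : isWriteAt E.ev a q x v) (hw' : isWriteAt E.ev b q' x' v') :
    PrecedesInAllViews E a b ∨ PrecedesInAllViews E b a := by
  rcases lt_trichotomy (deliveryTime E q q x v) (deliveryTime E q q' x' v') with h | h | h
  · exact .inl ⟨⟨q, .inr ⟨x, v, hw⟩⟩,
      fun p => (viewKey_lt_viewKey_of_isWriteAt_iff E hw hw' p).2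
        (deliveryTime_lt_of_adj E hadj hw hw' h p)⟩
  · have hd := dAt_deliveryTime E hw q
    rw [h] at hd
    exact (hadj.ne (hd.inj (dAt_deliveryTime E hw' q)).2.1).elim
  · exact .inr ⟨⟨q', .inr ⟨x', v', hw'⟩⟩,
      fun p => (viewKey_lt_viewKey_of_isWriteAt_iff E hw' hw p).2
        (deliveryTime_lt_of_adj E hadj.symm hw' hw h p)⟩

lemma precedesInAllViews_total_of_adj {p q : P} (hadj : G.Adj p q) (hne : a ≠ b)
    (ha : ∃ (x : X) (v : V), isWriteAt E.ev a p x v ∨ isWriteAt E.ev a q x v)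
    (hb : ∃ (x : X) (v : V), isWriteAt E.ev b p x v ∨ isWriteAt E.ev b q x v) :
    PrecedesInAllViews E a b ∨ PrecedesInAllViews E b a := by
  obtain ⟨x, v, hwa⟩ := ha
  obtain ⟨x', v', hwb⟩ := hb
  obtain ⟨qa, hqa, hwa⟩ : ∃ qa, (qa = p ∨ qa = q) ∧ isWriteAt E.ev a qa x v := by
    rcases hwa with h | h
    exacts [⟨p, .inl rfl, h⟩, ⟨q, .inr rfl, h⟩]
  obtain ⟨qb, hqb, hwb⟩ : ∃ qb, (qb = p ∨ qb = q) ∧ isWriteAt E.ev b qb x' v' := by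
    rcases hwb with h | h
    exacts [⟨p, .inl rfl, h⟩, ⟨q, .inr rfl, h⟩]
  by_cases hq : qa = qb
  · subst hq
    rcases hne.lt_or_gt with h | h
    · exact .inl (precedesInAllViews_of_procOrder E
        ⟨h, qa, .inr ⟨x, v, hwa⟩, .inr ⟨x', v', hwb⟩⟩)
    · exact .inr (precedesInAllViews_of_procOrder E
        ⟨h, qa, .inr ⟨x', v', hwb⟩, .inr ⟨x, v, hwa⟩⟩)
  · have hadj' : G.Adj qa qb := by
      rcases hqa with rfl | rfl <;> rcases hqb with rfl | rfl
      exacts [(hq rfl).elim, hadj, hadj.symm, (hq rfl).elim]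
    exact precedesInAllViews_or_of_adj E hadj' hwa hwb

lemma isCausalOrderTrace_causalH : IsCausalOrderTrace E.ev (causalH E.ev) := by
  refine ⟨fun a h => precedesInAllViews_irrefl E a (precedesInAllViews_of_causalH E h),
    fun _ _ _ => Relation.TransGen.trans, fun _ _ h => .single (.inl h), ?_, ?_⟩
  · intro t p x v hr
    obtain ⟨w, q, hw, -, hlast⟩ := viewKey_legal_of_isReadAt_some E hr
    refine ⟨w, q, hw, .single (.inr ⟨q, p, x, v, hw, hr⟩), ?_⟩
    rintro ⟨w', q', v', hw', hww', hw't⟩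
    exact hlast w' q' v' hw' ((precedesInAllViews_of_causalH E hww').2 p)
      ((precedesInAllViews_of_causalH E hw't).2 p)
  · rintro t p x hr ⟨w, q, v, hw, hwt⟩
    exact viewKey_legal_of_isReadAt_none E hr hw ((precedesInAllViews_of_causalH E hwt).2 p)

/-- The sequential history `Ŝ_p`. -/
def viewOrder (p : P) (a b : ℕ) : Prop :=
  Dom E.ev p a ∧ Dom E.ev p b ∧ viewKey E p a < viewKey E p b

lemma linearOnTrace_viewOrder (p : P) : LinearOnTrace E.ev (Dom E.ev p) (viewOrder E p) := by
  refine ⟨fun _ _ h => ⟨h.1, h.2.1⟩, fun _ h => lt_irrefl _ h.2.2,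
    fun _ _ _ h h' => ⟨h.1, h'.2.1, h.2.2.trans h'.2.2⟩, fun a b ha hb hne => ?_⟩
  obtain ⟨qa, hqa⟩ := ha.exists_isOpOf
  obtain ⟨qb, hqb⟩ := hb.exists_isOpOf
  rcases lt_trichotomy (viewKey E p a) (viewKey E p b) with h | h | h
  · exact .inl ⟨ha, hb, h⟩
  · exact (hne (eq_of_viewKey_eq E p hqa hqb h)).elim
  · exact .inr ⟨hb, ha, h⟩

lemma legalOnTrace_viewOrder (p : P) : LegalOnTrace E.ev (Dom E.ev p) (viewOrder E p) := by
  constructor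
  · intro t q x v ht hr
    obtain rfl := ht.eq_of_isReadAt hr
    obtain ⟨w, q', hw, hwt, hlast⟩ := viewKey_legal_of_isReadAt_some E hr
    have hDw : Dom E.ev q w := .inr ⟨q', x, v, hw⟩
    exact ⟨w, q', hDw, hw, ⟨hDw, ht, hwt⟩,
      fun ⟨w', q'', v', _, hw', h, h'⟩ => hlast w' q'' v' hw' h.2.2 h'.2.2⟩
  · rintro t q x ht hr ⟨w, q', v, -, hw, -, -, hwt⟩
    obtain rfl := ht.eq_of_isReadAt hr
    exact viewKey_legal_of_isReadAt_none E hr hw hwt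

end Orders

/-- **Theorem 2.**  Algorithm 2 (the fast-read register algorithm built on top
of the `G`-fisheye (SC,CC)-broadcast of Algorithm 1) implements `G`-fisheye
(SC,CC)-consistency: for every history produced by an execution of Algorithm 2
there are a causal order `⇝_H` and a subsuming (strict partial) order
`⇝*_{H,G} ⊇ ⇝_H` totally ordering the writes of every pair of `G`-neighboring
processes such that for each process `p` there is a sequential legal history
`Ŝ_p`, equivalent to `Ĥ|(p+W)` (it preserves the process orders on its
domain), that respects `⇝*_{H,G}`. -/
theorem algorithm2_implements_fisheye_consistency {P X V : Type}
    {G : SimpleGraph P} (E : Exec P X V G) :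
    ∃ r rstar : ℕ → ℕ → Prop,
      IsCausalOrderTrace E.ev r ∧
      (∀ a b, r a b → rstar a b) ∧
      (∀ a, ¬ rstar a a) ∧
      (∀ a b c, rstar a b → rstar b c → rstar a c) ∧
      (∀ p q : P, G.Adj p q → ∀ a b : ℕ, a ≠ b →
        (∃ (x : X) (v : V), isWriteAt E.ev a p x v ∨ isWriteAt E.ev a q x v) →
        (∃ (x : X) (v : V), isWriteAt E.ev b p x v ∨ isWriteAt E.ev b q x v) →
        rstar a b ∨ rstar b a) ∧
      (∀ p : P, ∃ S : ℕ → ℕ → Prop,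
        LinearOnTrace E.ev (Dom E.ev p) S ∧
        LegalOnTrace E.ev (Dom E.ev p) S ∧
        (∀ a b, Dom E.ev p a → Dom E.ev p b → procOrder E.ev a b → S a b) ∧
        (∀ a b, Dom E.ev p a → Dom E.ev p b → rstar a b → S a b)) := by
  refine ⟨causalH E.ev, PrecedesInAllViews E, isCausalOrderTrace_causalH E,
    fun _ _ => precedesInAllViews_of_causalH E, precedesInAllViews_irrefl E,
    fun _ _ _ => PrecedesInAllViews.trans E,
    fun _ _ hadj _ _ => precedesInAllViews_total_of_adj E hadj, fun p => ?_⟩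
  exact ⟨viewOrder E p, linearOnTrace_viewOrder E p, legalOnTrace_viewOrder E p,
    fun a b ha hb h => ⟨ha, hb, (precedesInAllViews_of_procOrder E h).2 p⟩,
    fun a b ha hb h => ⟨ha, hb, h.2 p⟩⟩

end FisheyeReg
end
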